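/- For every integer n ≥ 1, Ω'_n = Ω_n; equivalently, every valid configuration x : ℤ^2 → T'_n takes all its values in the subset T_n. -/

import Mathlib

structure WangTile (C : Type*) where
  right : C
  top : C
  left : C
  bottom : C
deriving DecidableEq

abbrev Lbl : Type := ℤ × ℤ × ℤ

def Vn (n : ℤ) : Set Lbl :=
  {v | 0 ≤ v.1 ∧ v.1 ≤ v.2.1 ∧ v.2.1 ≤ 1 ∧ v.2.1 ≤ v.2.2 ∧ v.2.2 ≤ n + 1}

def hatT {C : Type*} (t : WangTile C) : WangTile C :=
  ⟨t.top, t.right, t.bottom, t.left⟩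

def whiteTiles (n : ℤ) : Set (WangTile Lbl) :=
  {t | ∃ i j : ℤ, 1 ≤ i ∧ i ≤ n ∧ 1 ≤ j ∧ j ≤ n ∧
    t = ⟨(1, 1, i + 1), (1, 1, j + 1), (1, 1, i), (1, 1, j)⟩}

def blueH (n : ℤ) : Set (WangTile Lbl) :=
  {t | ∃ i : ℤ, 0 ≤ i ∧ i ≤ n ∧ t = ⟨(0, 0, i + 1), (1, 1, 1), (0, 0, i), (1, 1, n)⟩}

def greenH (n : ℤ) : Set (WangTile Lbl) :=
  {t | ∃ i : ℤ, 0 ≤ i ∧ i ≤ n ∧ t = ⟨(0, 1, i + 1), (1, 1, 1), (0, 0, i), (1, 1, n + 1)⟩}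

def yellowH (n : ℤ) : Set (WangTile Lbl) :=
  {t | ∃ i : ℤ, 1 ≤ i ∧ i ≤ n ∧ t = ⟨(0, 1, i + 1), (1, 1, 2), (0, 1, i), (1, 1, n + 1)⟩}

def antiH (n : ℤ) : Set (WangTile Lbl) :=
  {t | ∃ i : ℤ, 1 ≤ i ∧ i ≤ n ∧ t = ⟨(0, 0, i + 1), (1, 1, 2), (0, 1, i), (1, 1, n)⟩}

def junctionTile (n k l r s : ℤ) : WangTile Lbl :=
  ⟨(0, k, l), (0, r, s), (0, s, r + n), (0, l, k + n)⟩

def jPairs : Set (ℤ × ℤ) := {(0, 0), (0, 1), (1, 1)}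

def junctions (n : ℤ) : Set (WangTile Lbl) :=
  {t | ∃ k l r s : ℤ, (k, l) ∈ jPairs ∧ (r, s) ∈ jPairs ∧ t = junctionTile n k l r s}

def Text (n : ℤ) : Set (WangTile Lbl) :=
  whiteTiles n ∪ blueH n ∪ greenH n ∪ yellowH n ∪ antiH n ∪
    hatT '' blueH n ∪ hatT '' greenH n ∪ hatT '' yellowH n ∪ hatT '' antiH n ∪ junctions n

def Dset (n : ℤ) : Set (WangTile Lbl) :=
  {(⟨(0, 0, n + 1), (1, 1, 1), (0, 0, n), (1, 1, n)⟩ : WangTile Lbl),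
    hatT (⟨(0, 0, n + 1), (1, 1, 1), (0, 0, n), (1, 1, n)⟩ : WangTile Lbl),
    junctionTile n 0 0 1 1, junctionTile n 1 1 0 0}

def Tmet (n : ℤ) : Set (WangTile Lbl) :=
  Text n \ (antiH n ∪ hatT '' antiH n ∪ Dset n)

def ValidConfig {C : Type*} (T : Set (WangTile C)) (x : ℤ × ℤ → WangTile C) : Prop :=
  (∀ m, x m ∈ T) ∧
    (∀ m : ℤ × ℤ, (x m).right = (x (m.1 + 1, m.2)).left) ∧
    (∀ m : ℤ × ℤ, (x m).top = (x (m.1, m.2 + 1)).bottom)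

def ValidPattern {C : Type*} (T : Set (WangTile C)) (w h : ℕ) (p : ℕ → ℕ → WangTile C) : Prop :=
  (∀ i j, i < w → j < h → p i j ∈ T) ∧
    (∀ i j, i + 1 < w → j < h → (p i j).right = (p (i + 1) j).left) ∧
    (∀ i j, i < w → j + 1 < h → (p i j).top = (p i (j + 1)).bottom)

def bottomWord {C : Type*} (w : ℕ) (p : ℕ → ℕ → WangTile C) : List C :=
  (List.range w).map fun i => (p i 0).bottom

def topWord {C : Type*} (w h : ℕ) (p : ℕ → ℕ → WangTile C) : List C :=
  (List.range w).map fun i => (p i (h - 1)).top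

def leftWord {C : Type*} (h : ℕ) (p : ℕ → ℕ → WangTile C) : List C :=
  (List.range h).map fun j => (p 0 j).left

def rightWord {C : Type*} (w h : ℕ) (p : ℕ → ℕ → WangTile C) : List C :=
  (List.range h).map fun j => (p (w - 1) j).right

def tau (n : ℤ) (v : Lbl) : List Lbl :=
  if v.1 = v.2.2 then
    (0, v.1 - v.2.1 + 1, n + 1) :: List.replicate (n - v.2.2).toNat (1, 1, n + 1)
  else
    (0, v.1 - v.2.1 + 1, n) ::
      (List.replicate (v.2.2 - v.1 - 1).toNat (1, 1, n) ++
        List.replicate (n + 1 - v.2.2).toNat (1, 1, n + 1))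

/-!
Each row of a valid configuration is made either of white and vertical tiles or of horizontal
tiles and junctions ("colored" rows), according to the first coordinate of its horizontal labels,
and likewise for columns. Going up a column, the third coordinate of the vertical labels grows by
one across each white row and stays in `[0, n]` there, so colored rows recur, and comparing two
consecutive colored rows `y < y'` gives, for every column `a`,
`n + c (a + 1) y' = c a y + colType a + (y' - y - 1)`, where `c` is the middle coordinate of the
left labels. An antigreen tile at `(z, y)` is a descent `c z y = 1`, `c (z + 1) y = 0` in a white
column; the relation moves it to column `z + 1` on the next colored row, so all columns right of
`z` would be white, contradicting the recurrence of colored columns. The same relation read along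
columns excludes the junction `j^{0,0,1,1}`, and the blue tile of index `n` would need a right
neighbour with left label `(0, 0, n + 1)`. The other forbidden tiles are transposes of these.
-/

section Tiles

variable {n : ℤ} {t : WangTile Lbl}

lemma hatT_mem_whiteTiles (ht : t ∈ whiteTiles n) : hatT t ∈ whiteTiles n := by
  obtain ⟨i, j, hi, hi', hj, hj', rfl⟩ := ht
  exact ⟨j, i, hj, hj', hi, hi', rfl⟩

lemma hatT_mem_junctions (ht : t ∈ junctions n) : hatT t ∈ junctions n := by
  obtain ⟨k, l, r, s, hkl, hrs, rfl⟩ := ht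
  exact ⟨r, s, k, l, hrs, hkl, rfl⟩

lemma hatT_mem_Text (ht : t ∈ Text n) : hatT t ∈ Text n := by
  simp only [Text, Set.mem_union] at ht ⊢
  rcases ht with ((((((((h | h) | h) | h) | h) | ⟨u, h, rfl⟩) | ⟨u, h, rfl⟩) | ⟨u, h, rfl⟩) |
    ⟨u, h, rfl⟩) | h
  · have := hatT_mem_whiteTiles h; tauto
  · have := Set.mem_image_of_mem hatT h; tauto
  · have := Set.mem_image_of_mem hatT h; tauto
  · have := Set.mem_image_of_mem hatT h; tauto
  · have := Set.mem_image_of_mem hatT h; tauto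
  · tauto
  · tauto
  · tauto
  · tauto
  · have := hatT_mem_junctions h; tauto

-- Only the row-wise laws: the column-wise ones are those of `hatT t`.
structure TileLaws (n : ℤ) (t : WangTile Lbl) : Prop where
  right_fst : t.right.1 = t.left.1
  left_fst : t.left.1 = 0 ∨ t.left.1 = 1
  left_snd : t.left.2.1 = 0 ∨ t.left.2.1 = 1
  white_row : t.left.1 = 1 → t.top.2.2 = t.bottom.2.2 + 1 ∧ 0 ≤ t.bottom.2.2 ∧ t.bottom.2.2 ≤ n
  colored_row : t.left.1 = 0 → t.top.2.2 = t.left.2.1 + t.bottom.1 ∧ t.bottom.2.2 = n + t.right.2.1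
  junction : t.left.1 = 0 → t.bottom.1 = 0 → t.top.2.1 ≤ t.left.2.1
  left_ne : t.left ≠ (0, 0, n + 1)

lemma tileLaws_of_mem_Text (ht : t ∈ Text n) : TileLaws n t := by
  simp only [Text, Set.mem_union, Set.mem_image] at ht
  rcases ht with ((((((((⟨i, j, hi, hi', hj, hj', rfl⟩ | ⟨i, hi, hi', rfl⟩) | ⟨i, hi, hi', rfl⟩) |
    ⟨i, hi, hi', rfl⟩) | ⟨i, hi, hi', rfl⟩) | ⟨_, ⟨i, hi, hi', rfl⟩, rfl⟩) |
    ⟨_, ⟨i, hi, hi', rfl⟩, rfl⟩) | ⟨_, ⟨i, hi, hi', rfl⟩, rfl⟩) | ⟨_, ⟨i, hi, hi', rfl⟩, rfl⟩) |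
    ⟨k, l, r, s, hkl, hrs, rfl⟩
  rotate_left 9
  · simp only [jPairs, Set.mem_insert_iff, Set.mem_singleton_iff, Prod.mk.injEq] at hkl hrs
    constructor <;> simp [junctionTile] <;> omega
  all_goals constructor <;> simp [hatT] <;> omega

end Tiles

lemma Int.eq_add_sub_of_forall_succ {f : ℤ → ℤ} {a b : ℤ} (hab : a ≤ b)
    (hf : ∀ k, a ≤ k → k < b → f (k + 1) = f k + 1) : f b = f a + (b - a) := by
  induction b, hab using Int.leInduction with
  | base => ring
  | succ b hab ih =>
    rw [hf b hab (by omega), ih fun k hk hkb => hf k hk (by omega)]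
    ring

def transposeConfig {C : Type*} (x : ℤ × ℤ → WangTile C) : ℤ × ℤ → WangTile C :=
  fun m => hatT (x m.swap)

/-- `0` on rows of horizontal colored tiles and junctions, `1` on rows of white and vertical
tiles. -/
def rowType (x : ℤ × ℤ → WangTile Lbl) (b : ℤ) : ℤ := (x (0, b)).left.1

def colType (x : ℤ × ℤ → WangTile Lbl) (a : ℤ) : ℤ := rowType (transposeConfig x) a

def NextColoredRow (x : ℤ × ℤ → WangTile Lbl) (y y' : ℤ) : Prop :=
  y < y' ∧ rowType x y' = 0 ∧ ∀ k, y < k → k < y' → rowType x k = 1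

def Descent (x : ℤ × ℤ → WangTile Lbl) (z y : ℤ) : Prop :=
  rowType x y = 0 ∧ colType x z = 1 ∧ (x (z, y)).left.2.1 = 1 ∧ (x (z + 1, y)).left.2.1 = 0

namespace ValidConfig

variable {n : ℤ} {x : ℤ × ℤ → WangTile Lbl}

lemma transpose (hv : ValidConfig (Text n) x) : ValidConfig (Text n) (transposeConfig x) :=
  ⟨fun m => hatT_mem_Text (hv.1 m.swap), fun m => hv.2.2 m.swap, fun m => hv.2.1 m.swap⟩

lemma tileLaws (hv : ValidConfig (Text n) x) (a b : ℤ) : TileLaws n (x (a, b)) :=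
  tileLaws_of_mem_Text (hv.1 (a, b))

lemma right_eq (hv : ValidConfig (Text n) x) (a b : ℤ) : (x (a, b)).right = (x (a + 1, b)).left :=
  hv.2.1 (a, b)

lemma top_eq (hv : ValidConfig (Text n) x) (a b : ℤ) : (x (a, b)).top = (x (a, b + 1)).bottom :=
  hv.2.2 (a, b)

lemma left_fst_eq_rowType (hv : ValidConfig (Text n) x) (a b : ℤ) :
    (x (a, b)).left.1 = rowType x b := by
  have step (c : ℤ) : (x (c + 1, b)).left.1 = (x (c, b)).left.1 := by
    rw [← hv.right_eq, (hv.tileLaws c b).right_fst]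
  induction a using Int.induction_on with
  | zero => rfl
  | succ a ih => rw [step, ih]
  | pred a ih => rw [← ih, ← step, sub_add_cancel]

lemma bottom_fst_eq_colType (hv : ValidConfig (Text n) x) (a b : ℤ) :
    (x (a, b)).bottom.1 = colType x a :=
  hv.transpose.left_fst_eq_rowType b a

lemma rowType_eq_zero_or_one (hv : ValidConfig (Text n) x) (b : ℤ) :
    rowType x b = 0 ∨ rowType x b = 1 :=
  (hv.tileLaws 0 b).left_fst

lemma colType_eq_zero_or_one (hv : ValidConfig (Text n) x) (a : ℤ) :
    colType x a = 0 ∨ colType x a = 1 :=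
  hv.transpose.rowType_eq_zero_or_one a

lemma left_snd_eq_zero_or_one (hv : ValidConfig (Text n) x) (a b : ℤ) :
    (x (a, b)).left.2.1 = 0 ∨ (x (a, b)).left.2.1 = 1 :=
  (hv.tileLaws a b).left_snd

lemma bottom_snd_eq_zero_or_one (hv : ValidConfig (Text n) x) (a b : ℤ) :
    (x (a, b)).bottom.2.1 = 0 ∨ (x (a, b)).bottom.2.1 = 1 :=
  hv.transpose.left_snd_eq_zero_or_one b a

lemma bottom_snd_snd_succ (hv : ValidConfig (Text n) x) {b : ℤ} (hb : rowType x b = 1) (a : ℤ) :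
    (x (a, b + 1)).bottom.2.2 = (x (a, b)).bottom.2.2 + 1 := by
  rw [← hv.top_eq]
  exact ((hv.tileLaws a b).white_row (by rw [hv.left_fst_eq_rowType, hb])).1

lemma exists_rowType_eq_zero (hv : ValidConfig (Text n) x) (b : ℤ) :
    ∃ k, b < k ∧ rowType x k = 0 := by
  by_contra! h
  have hwhite (k : ℤ) (hk : b < k) : rowType x k = 1 :=
    (hv.rowType_eq_zero_or_one k).resolve_left (h k hk)
  have hbound (k : ℤ) (hk : b < k) :=
    ((hv.tileLaws 0 k).white_row (by rw [hv.left_fst_eq_rowType, hwhite k hk])).2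
  have hchain := Int.eq_add_sub_of_forall_succ (f := fun k => (x (0, k)).bottom.2.2)
    (a := b + 1) (b := b + n.toNat + 2) (by omega) fun k hk _ =>
      hv.bottom_snd_snd_succ (hwhite k (by omega)) 0
  have := hbound (b + 1) (by omega)
  have := hbound (b + n.toNat + 2) (by omega)
  omega


lemma exists_nextColoredRow (hv : ValidConfig (Text n) x) (y : ℤ) :
    ∃ y', NextColoredRow x y y' := by
  obtain ⟨y', ⟨hyy', hy'⟩, hleast⟩ :=
    Int.exists_least_of_bdd (P := fun k => y < k ∧ rowType x k = 0) ⟨y, fun _ hk => hk.1.le⟩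
      (hv.exists_rowType_eq_zero y)
  refine ⟨y', hyy', hy', fun k hk hky' => ?_⟩
  refine (hv.rowType_eq_zero_or_one k).resolve_left fun hk0 => ?_
  exact absurd (hleast k ⟨hk, hk0⟩) (not_le.mpr hky')

lemma add_left_snd_of_nextColoredRow (hv : ValidConfig (Text n) x) {y y' : ℤ}
    (hy : rowType x y = 0) (h : NextColoredRow x y y') (a : ℤ) :
    n + (x (a + 1, y')).left.2.1 = (x (a, y)).left.2.1 + colType x a + (y' - y - 1) := by
  obtain ⟨hyy', hy', hwhite⟩ := h
  have hstart := ((hv.tileLaws a y).colored_row (by rw [hv.left_fst_eq_rowType, hy])).1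
  have hend := ((hv.tileLaws a y').colored_row (by rw [hv.left_fst_eq_rowType, hy'])).2
  have hchain := Int.eq_add_sub_of_forall_succ (f := fun k => (x (a, k)).bottom.2.2)
    (a := y + 1) (b := y') (by omega) fun k hk hky' =>
      hv.bottom_snd_snd_succ (hwhite k (by omega) hky') a
  rw [hv.top_eq, hv.bottom_fst_eq_colType] at hstart
  rw [hv.right_eq] at hend
  omega

lemma exists_descent_succ (hv : ValidConfig (Text n) x) {z y : ℤ} (h : Descent x z y) :
    ∃ y', Descent x (z + 1) y' := by
  obtain ⟨hy, hz, hc, hc'⟩ := h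
  obtain ⟨y', hnext⟩ := hv.exists_nextColoredRow y
  have e := hv.add_left_snd_of_nextColoredRow hy hnext z
  have e' := hv.add_left_snd_of_nextColoredRow hy hnext (z + 1)
  have := hv.left_snd_eq_zero_or_one (z + 1) y'
  have := hv.left_snd_eq_zero_or_one (z + 1 + 1) y'
  have := hv.colType_eq_zero_or_one (z + 1)
  exact ⟨y', hnext.2.1, by omega, by omega, by omega⟩

lemma colType_add_eq_one_of_descent (hv : ValidConfig (Text n) x) {z y : ℤ} (h : Descent x z y)
    (k : ℕ) : colType x (z + k) = 1 := by
  induction k generalizing z y with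
  | zero => simpa using h.2.1
  | succ k ih =>
    obtain ⟨y', h'⟩ := hv.exists_descent_succ h
    simpa [add_assoc, add_comm (1 : ℤ)] using ih h'

lemma not_mem_antiH (hv : ValidConfig (Text n) x) (z y : ℤ) : x (z, y) ∉ antiH n := by
  rintro ⟨i, -, -, hxzy⟩
  have hdesc : Descent x z y := by
    refine ⟨?_, ?_, by rw [hxzy], ?_⟩
    · rw [← hv.left_fst_eq_rowType z, hxzy]
    · rw [← hv.bottom_fst_eq_colType z y, hxzy]
    · rw [← hv.right_eq, hxzy]
  obtain ⟨a, hza, ha⟩ := hv.transpose.exists_rowType_eq_zero z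
  have := hv.colType_add_eq_one_of_descent hdesc (a - z).toNat
  rw [Int.toNat_of_nonneg (by omega), add_sub_cancel] at this
  exact absurd (ha.symm.trans this) zero_ne_one


lemma ne_junctionTile (hn : 1 ≤ n) (hv : ValidConfig (Text n) x) (a b : ℤ) :
    x (a, b) ≠ junctionTile n 0 0 1 1 := by
  intro h
  have hb : rowType x b = 0 := by rw [← hv.left_fst_eq_rowType a, h]; rfl
  have ha : colType x a = 0 := by rw [← hv.bottom_fst_eq_colType a b, h]; rfl
  have hbot : (x (a, b)).bottom.2.1 = 0 := by rw [h]; rfl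
  have habove₁ : (x (a, b + 1)).bottom.2.1 = 1 := by rw [← hv.top_eq, h]; rfl
  have habove₂ : (x (a, b + 1)).bottom.2.2 = 1 := by rw [← hv.top_eq, h]; rfl
  have hright : (x (a + 1, b)).left.2.1 = 0 := by rw [← hv.right_eq, h]; rfl
  obtain ⟨a', hcol⟩ := hv.transpose.exists_nextColoredRow a
  have e₀ : n + (x (a', b + 1)).bottom.2.1 = (x (a, b)).bottom.2.1 + rowType x b + (a' - a - 1) :=
    hv.transpose.add_left_snd_of_nextColoredRow ha hcol b
  have e₁ : n + (x (a', b + 1 + 1)).bottom.2.1 =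
      (x (a, b + 1)).bottom.2.1 + rowType x (b + 1) + (a' - a - 1) :=
    hv.transpose.add_left_snd_of_nextColoredRow ha hcol (b + 1)
  have := hv.bottom_snd_eq_zero_or_one a' (b + 1)
  have := hv.bottom_snd_eq_zero_or_one a' (b + 1 + 1)
  have := hv.rowType_eq_zero_or_one (b + 1)
  have hb₁ : rowType x (b + 1) = 0 := by omega
  -- the tile above is then a junction with bottom label `(0, 1, 1)`, which forces `n = 1`
  have hn₁ : n = 1 := by
    have hcolored := ((hv.tileLaws a (b + 1)).colored_row (by rw [hv.left_fst_eq_rowType, hb₁])).2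
    rw [hv.right_eq] at hcolored
    have := hv.left_snd_eq_zero_or_one (a + 1) (b + 1)
    omega
  have hrow : NextColoredRow x b (b + 1) := ⟨lt_add_one b, hb₁, fun k hk hk' => by omega⟩
  have e₂ := hv.add_left_snd_of_nextColoredRow hb hrow (a + 1)
  have hwhite : colType x (a + 1) = 1 := hcol.2.2 (a + 1) (by omega) (by omega)
  have hjunction := (hv.tileLaws a' (b + 1)).junction (by rw [hv.left_fst_eq_rowType, hb₁])
    (by rw [hv.bottom_fst_eq_colType]; exact hcol.2.1)
  rw [hv.top_eq] at hjunction
  rw [show a + 1 + 1 = a' by omega] at e₂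
  omega

lemma ne_last_blue (hv : ValidConfig (Text n) x) (a b : ℤ) :
    x (a, b) ≠ ⟨(0, 0, n + 1), (1, 1, 1), (0, 0, n), (1, 1, n)⟩ := by
  intro h
  exact (hv.tileLaws (a + 1) b).left_ne (by rw [← hv.right_eq, h])

lemma mem_Tmet (hn : 1 ≤ n) (hv : ValidConfig (Text n) x) (m : ℤ × ℤ) : x m ∈ Tmet n := by
  obtain ⟨a, b⟩ := m
  refine ⟨hv.1 (a, b), ?_⟩
  simp only [Dset, Set.mem_union, Set.mem_insert_iff, Set.mem_singleton_iff]
  rintro ((h | ⟨t, ht, h⟩) | h | h | h | h)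
  · exact hv.not_mem_antiH a b h
  · exact hv.transpose.not_mem_antiH b a (by rw [transposeConfig, Prod.swap_prod_mk, ← h]; exact ht)
  · exact hv.ne_last_blue a b h
  · exact hv.transpose.ne_last_blue b a (congrArg hatT h)
  · exact hv.ne_junctionTile hn a b h
  · exact hv.transpose.ne_junctionTile hn b a (congrArg hatT h)

end ValidConfig

/-- `Ω'_n = Ω_n`; equivalently every valid configuration over `T'_n`
takes all its values in `T_n`. -/
theorem stmt14 (n : ℤ) (hn : 1 ≤ n) :
    {x : ℤ × ℤ → WangTile Lbl | ValidConfig (Text n) x} =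
      {x : ℤ × ℤ → WangTile Lbl | ValidConfig (Tmet n) x} ∧
    ∀ x : ℤ × ℤ → WangTile Lbl, ValidConfig (Text n) x → ∀ m : ℤ × ℤ, x m ∈ Tmet n := by
  have hmem : ∀ x : ℤ × ℤ → WangTile Lbl, ValidConfig (Text n) x → ∀ m, x m ∈ Tmet n :=
    fun _ hv => hv.mem_Tmet hn
  exact ⟨Set.ext fun x => ⟨fun hv => ⟨hmem x hv, hv.2⟩, fun hv => ⟨fun m => (hv.1 m).1, hv.2⟩⟩,
    hmem⟩
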